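/- arXiv:2304.12533 — 3 statements merged into one kernel-verified Lean document; each statement's English description precedes it below -/
import Mathlib

section
/- Sandwich bound (Proposition 6 analogue): Under the hypotheses that J̲* satisfies the under-estimate HJB inequality along the optimal trajectory from x, and that π̲ is an admissible policy, one has J̲*(x) ≤ J*(x) ≤ J^{π̲}(x). -/
/-!
Along the optimal trajectory the HJB inequality says `d/dt J̲*(x*(t)) ≥ -l(x*(t), u*(t))`.
Integrating over `[0, T]` and letting `T → ∞`, where `x*(T) → x_d` and `J̲*(x_d) = 0`, gives
`J̲*(x₀) ≤ ∫₀^∞ l(x*, u*) = J*(x₀)`. The upper bound holds because the control generated by `π̲`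
is admissible, so its cost is at least the infimum.
-/

open MeasureTheory Set Filter Topology

theorem le_add_integral_Ici_of_hasDerivAt_of_tendsto {g g' φ : ℝ → ℝ} {a c : ℝ}
    (hg : ∀ t ∈ Ici a, HasDerivAt g (g' t) t) (hφg : ∀ t ∈ Ici a, -φ t ≤ g' t)
    (hφ : IntegrableOn φ (Ici a)) (hlim : Tendsto g atTop (𝓝 c)) :
    g a ≤ c + ∫ t in Ici a, φ t := by
  have hfinite : ∀ T ≥ a, g a ≤ g T + ∫ t in a..T, φ t := by
    intro T hT
    have h := intervalIntegral.integral_le_sub_of_hasDeriv_right_of_le hT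
      (fun t ht => (hg t ht.1).continuousAt.continuousWithinAt)
      (fun t ht => (hg t ht.1.le).hasDerivWithinAt)
      (hφ.mono_set Icc_subset_Ici_self).neg (fun t ht => hφg t ht.1.le)
    rw [Pi.neg_def, intervalIntegral.integral_neg] at h
    linarith
  have hint : Tendsto (fun T => ∫ t in a..T, φ t) atTop (𝓝 (∫ t in Ioi a, φ t)) :=
    intervalIntegral_tendsto_integral_Ioi a (hφ.mono_set Ioi_subset_Ici_self) tendsto_id
  rw [integral_Ici_eq_integral_Ioi]
  exact ge_of_tendsto (hlim.add hint) ((eventually_ge_atTop a).mono hfinite)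

theorem le_add_integral_running_cost_of_hjb
    {E F : Type*} [NormedAddCommGroup E] [NormedSpace ℝ E]
    {V : E → ℝ} {V' : E → E →L[ℝ] ℝ} {l : E → F → ℝ} {f : E → F → E}
    {x : ℝ → E} {u : ℝ → F} {xd : E}
    (hV : ∀ y, HasFDerivAt V (V' y) y)
    (hHJB : ∀ t ∈ Ici (0 : ℝ), 0 ≤ l (x t) (u t) + V' (x t) (f (x t) (u t)))
    (hode : ∀ t ∈ Ici (0 : ℝ), HasDerivAt x (f (x t) (u t)) t)
    (hconv : Tendsto x atTop (𝓝 xd))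
    (hl : IntegrableOn (fun t => l (x t) (u t)) (Ici 0)) :
    V (x 0) ≤ V xd + ∫ t in Ici (0 : ℝ), l (x t) (u t) :=
  le_add_integral_Ici_of_hasDerivAt_of_tendsto
    (fun t ht => (hV (x t)).comp_hasDerivAt t (hode t ht))
    (fun t ht => by linarith [hHJB t ht]) hl
    ((hV xd).continuousAt.tendsto.comp hconv)

theorem sandwich_bound_general (n m : ℕ)
    (Junder : (Fin n → ℝ) → ℝ) (Junder' : (Fin n → ℝ) → ((Fin n → ℝ) →L[ℝ] ℝ))
    (hJ : ∀ y, HasFDerivAt Junder (Junder' y) y)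
    (l : (Fin n → ℝ) → (Fin m → ℝ) → ℝ)
    (f : (Fin n → ℝ) → (Fin m → ℝ) → (Fin n → ℝ))
    (U : Set (Fin m → ℝ)) (xd : Fin n → ℝ) (x₀ : Fin n → ℝ)
    (hJd : Junder xd = 0)
    (hHJB : ∀ y, ∀ u ∈ U, 0 ≤ l y u + Junder' y (f y u))
    -- admissible control signals from x₀ and their total costs; J*(x₀) = sInf (cost '' Adm)
    (Adm : Set (ℝ → (Fin m → ℝ))) (cost : (ℝ → (Fin m → ℝ)) → ℝ)
    (hcost_nonneg : ∀ u ∈ Adm, 0 ≤ cost u)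
    -- an optimal trajectory from x₀ achieving J*(x₀)
    (xstar : ℝ → (Fin n → ℝ)) (ustar : ℝ → (Fin m → ℝ))
    (hx0 : xstar 0 = x₀)
    (hodestar : ∀ t ∈ Ici (0:ℝ), HasDerivAt xstar (f (xstar t) (ustar t)) t)
    (hUstar : ∀ t ∈ Ici (0:ℝ), ustar t ∈ U)
    (hconvstar : Filter.Tendsto xstar Filter.atTop (nhds xd))
    (hintstar : IntegrableOn (fun t => l (xstar t) (ustar t)) (Ici 0))
    (hopt : cost ustar = sInf (cost '' Adm))
    (hcost_star : cost ustar = ∫ t in Ici (0:ℝ), l (xstar t) (ustar t))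
    -- π̲ is an admissible policy with cost J^{π̲}(x₀)
    (πunder : (Fin n → ℝ) → (Fin m → ℝ)) (xπ : ℝ → (Fin n → ℝ)) (Jπ : ℝ)
    (hadm_π : (fun t => πunder (xπ t)) ∈ Adm)
    (hJπ : Jπ = cost (fun t => πunder (xπ t))) :
    Junder x₀ ≤ sInf (cost '' Adm) ∧ sInf (cost '' Adm) ≤ Jπ := by
  have hbdd : BddBelow (cost '' Adm) := ⟨0, by rintro _ ⟨u, hu, rfl⟩; exact hcost_nonneg u hu⟩
  refine ⟨?_, hJπ ▸ csInf_le hbdd ⟨_, hadm_π, rfl⟩⟩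
  have h := le_add_integral_running_cost_of_hjb hJ
    (fun t ht => hHJB _ _ (hUstar t ht)) hodestar hconvstar hintstar
  rwa [hx0, hJd, zero_add, ← hcost_star, hopt] at h

/-- Proposition 6 analogue (sandwich bound): if `J̲*` satisfies the under-estimate HJB
inequality along the optimal trajectory from `x₀`, and `π̲` is an admissible policy,
then `J̲*(x₀) ≤ J*(x₀) ≤ J^{π̲}(x₀)`. -/
theorem sandwich_bound (n m : ℕ)
    (Junder : (Fin n → ℝ) → ℝ) (Junder' : (Fin n → ℝ) → ((Fin n → ℝ) →L[ℝ] ℝ))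
    (hJ : ∀ y, HasFDerivAt Junder (Junder' y) y)
    (l : (Fin n → ℝ) → (Fin m → ℝ) → ℝ)
    (f : (Fin n → ℝ) → (Fin m → ℝ) → (Fin n → ℝ))
    (U : Set (Fin m → ℝ)) (xd : Fin n → ℝ) (x₀ : Fin n → ℝ)
    (hJd : Junder xd = 0)
    (hHJB : ∀ y, ∀ u ∈ U, 0 ≤ l y u + Junder' y (f y u))
    -- admissible control signals from x₀ and their total costs; J*(x₀) = sInf (cost '' Adm)
    (Adm : Set (ℝ → (Fin m → ℝ))) (cost : (ℝ → (Fin m → ℝ)) → ℝ)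
    (hcost_nonneg : ∀ u ∈ Adm, 0 ≤ cost u)
    -- an optimal trajectory from x₀ achieving J*(x₀)
    (xstar : ℝ → (Fin n → ℝ)) (ustar : ℝ → (Fin m → ℝ))
    (hadm_star : ustar ∈ Adm) (hx0 : xstar 0 = x₀)
    (hodestar : ∀ t ∈ Ici (0:ℝ), HasDerivAt xstar (f (xstar t) (ustar t)) t)
    (hUstar : ∀ t ∈ Ici (0:ℝ), ustar t ∈ U)
    (hconvstar : Filter.Tendsto xstar Filter.atTop (nhds xd))
    (hintstar : IntegrableOn (fun t => l (xstar t) (ustar t)) (Ici 0))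
    (hopt : cost ustar = sInf (cost '' Adm))
    (hcost_star : cost ustar = ∫ t in Ici (0:ℝ), l (xstar t) (ustar t))
    -- π̲ is an admissible policy with cost J^{π̲}(x₀)
    (πunder : (Fin n → ℝ) → (Fin m → ℝ)) (xπ : ℝ → (Fin n → ℝ)) (Jπ : ℝ)
    (hadm_π : (fun t => πunder (xπ t)) ∈ Adm)
    (hJπ : Jπ = cost (fun t => πunder (xπ t))) :
    Junder x₀ ≤ sInf (cost '' Adm) ∧ sInf (cost '' Adm) ≤ Jπ :=
  sandwich_bound_general n m Junder Junder' hJ l f U xd x₀ hJd hHJB Adm cost hcost_nonneg xstar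
    ustar hx0 hodestar hUstar hconvstar hintstar hopt hcost_star πunder xπ Jπ hadm_π hJπ
end

section
/- Connectedness of the invariant sublevel set (Proposition 3): Let X ⊂ ℝⁿ be compact containing x_d in its interior, V : ℝⁿ → ℝ continuously differentiable with V(x_d) = 0, V ≥ 0 on X, and suppose along the flow of ẋ = g(x) one has d/dt V(x(t)) ≤ -l(x(t)) < 0 for every x(t) ∈ X \ {x_d}, where l is a continuous function positive away from x_d. Define ρ̄ = min over ∂X of V and B = {x ∈ X : V(x) < ρ̄}. Then B is connected (assuming solutions of ẋ = g(x) exist for all forward time from every point of B). In particular, B has no connected component avoiding x_d. -/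
open Set Filter Topology

/-- Proposition 3 (connectedness of the invariant sublevel set): `X` compact with
`x_d ∈ interior X`, `V` is `C¹` with `V(x_d) = 0` and `V ≥ 0` on `X`, and along the flow
`d/dt V(x(t)) ≤ -l(x(t)) < 0` on `X \ {x_d}` (pointwise `V'(y)(g(y)) ≤ -l(y)` and
`l(y) > 0` for `y ∈ X \ {x_d}`, `l` continuous). Assuming forward-complete solutions of
`ẋ = g(x)` from every point of `B = {x ∈ X : V(x) < min_{∂X} V}`, `B` is connected. -/
theorem sublevel_connected (n : ℕ)
    (V : (Fin n → ℝ) → ℝ) (V' : (Fin n → ℝ) → ((Fin n → ℝ) →L[ℝ] ℝ))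
    (hV : ∀ y, HasFDerivAt V (V' y) y)
    (g : (Fin n → ℝ) → (Fin n → ℝ)) (xd : Fin n → ℝ)
    (l : (Fin n → ℝ) → ℝ) (hl : Continuous l)
    (X : Set (Fin n → ℝ)) (hX : IsCompact X) (hfr : (frontier X).Nonempty)
    (hxd : xd ∈ interior X) (hVd : V xd = 0) (hVpos : ∀ y ∈ X, 0 ≤ V y)
    (hlpos : ∀ y ∈ X \ {xd}, 0 < l y)
    (hdecr : ∀ y ∈ X \ {xd}, V' y (g y) ≤ -(l y))
    (hflow : ∀ x₀ ∈ {y ∈ X | V y < sInf (V '' frontier X)},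
      ∃ x : ℝ → (Fin n → ℝ), x 0 = x₀ ∧ ∀ t ∈ Ici (0:ℝ), HasDerivAt x (g (x t)) t) :
    IsPreconnected {y ∈ X | V y < sInf (V '' frontier X)} := by
  set ρ : ℝ := sInf (V '' frontier X) with hρdef
  set S : Set (Fin n → ℝ) := {y ∈ X | V y < ρ} with hSdef
  have hVc : Continuous V := by
    rw [continuous_iff_continuousAt]; exact fun y => (hV y).continuousAt
  have hXcl : IsClosed X := hX.isClosed
  have hfrX : frontier X ⊆ X := hXcl.frontier_subset
  have hfrcomp : IsCompact (frontier X) := hX.of_isClosed_subset isClosed_frontier hfrX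
  have hρle : ∀ y ∈ frontier X, ρ ≤ V y := fun y hy =>
    csInf_le (hfrcomp.image hVc).bddBelow (mem_image_of_mem V hy)
  -- S is open
  have hSeq : S = interior X ∩ V ⁻¹' Iio ρ := by
    ext y
    constructor
    · rintro ⟨hyX, hyV⟩
      refine ⟨?_, hyV⟩
      by_contra hni
      have hyfr : y ∈ frontier X := ⟨subset_closure hyX, hni⟩
      exact absurd hyV (not_lt.mpr (hρle y hyfr))
    · rintro ⟨hyI, hyV⟩
      exact ⟨interior_subset hyI, hyV⟩
  have hSopen : IsOpen S := by
    rw [hSeq]; exact isOpen_interior.inter (isOpen_Iio.preimage hVc)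
  -- the key symmetric claim
  suffices H : ∀ u v : Set (Fin n → ℝ), IsOpen u → IsOpen v → S ⊆ u ∪ v →
      (S ∩ u).Nonempty → (S ∩ v).Nonempty → xd ∈ u → (S ∩ (u ∩ v)).Nonempty by
    intro u v hu hv huv hSu hSv
    have hρpos : 0 < ρ := by
      obtain ⟨w, hwS, _⟩ := hSu
      exact lt_of_le_of_lt (hVpos w hwS.1) hwS.2
    have hxdS : xd ∈ S := ⟨interior_subset hxd, by rw [hVd]; exact hρpos⟩
    rcases huv hxdS with h | h
    · exact H u v hu hv huv hSu hSv h
    · have := H v u hv hu (by rwa [union_comm]) hSv hSu h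
      rwa [inter_comm v u] at this
  intro u v hu hv huv hSu hSv hxdu
  by_contra hne
  rw [not_nonempty_iff_eq_empty] at hne
  obtain ⟨a, haS, hav⟩ := hSv
  set A : Set (Fin n → ℝ) := S ∩ v with hAdef
  have hAopen : IsOpen A := hSopen.inter hv
  have haA : a ∈ A := ⟨haS, hav⟩
  have hAX : A ⊆ X := fun y hy => hy.1.1
  have hclA : closure A ⊆ X := closure_minimal hAX hXcl
  have hAcomp : IsCompact (closure A) := hX.of_isClosed_subset isClosed_closure hclA
  obtain ⟨x₁, hx₁cl, hmin⟩ :=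
    hAcomp.exists_isMinOn ⟨a, subset_closure haA⟩ hVc.continuousOn
  have hmin' : ∀ y ∈ closure A, V x₁ ≤ V y := fun y hy => hmin hy
  have hx₁S : x₁ ∈ S :=
    ⟨hclA hx₁cl, lt_of_le_of_lt (hmin' a (subset_closure haA)) haS.2⟩
  have hx₁A : x₁ ∈ A := by
    rcases huv hx₁S with hu' | hv'
    · exfalso
      have hdisj : u ∩ A ⊆ S ∩ (u ∩ v) := by
        rintro y ⟨hyu, hyS, hyv⟩
        exact ⟨hyS, hyu, hyv⟩
      have h1 : x₁ ∈ closure (u ∩ A) := hu.inter_closure ⟨hu', hx₁cl⟩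
      have h2 := closure_mono hdisj h1
      rw [hne, closure_empty] at h2
      exact h2
    · exact ⟨hx₁S, hv'⟩
  have hx₁xd : x₁ ≠ xd := by
    intro h
    rw [h] at hx₁S hx₁A
    have : xd ∈ S ∩ (u ∩ v) := ⟨hx₁S, hxdu, hx₁A.2⟩
    rw [hne] at this
    exact this
  obtain ⟨x, hx0, hx'⟩ := hflow x₁ hx₁S
  have hd0 : HasDerivAt x (g (x 0)) 0 := hx' 0 self_mem_Ici
  have hVd0 : HasDerivAt (fun t => V (x t)) (V' (x 0) (g (x 0))) 0 :=
    (hV (x 0)).comp_hasDerivAt 0 hd0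
  have hXmem : x₁ ∈ X \ {xd} := ⟨hx₁S.1, hx₁xd⟩
  have hc : V' (x 0) (g (x 0)) < 0 := by
    rw [hx0]
    have h1 := hdecr x₁ hXmem
    have h2 := hlpos x₁ hXmem
    linarith
  have hslope := hasDerivAt_iff_tendsto_slope.mp hVd0
  have hmono : 𝓝[>] (0:ℝ) ≤ 𝓝[≠] (0:ℝ) :=
    nhdsWithin_mono 0 (fun t ht => ne_of_gt ht)
  have hev1 : ∀ᶠ t in 𝓝[>] (0:ℝ), slope (fun t => V (x t)) 0 t < 0 :=
    (hslope.mono_left hmono).eventually_lt_const hc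
  have hev2 : ∀ᶠ t in 𝓝[>] (0:ℝ), x t ∈ A := by
    have : ∀ᶠ t in 𝓝 (0:ℝ), x t ∈ A := by
      have hxA : x 0 ∈ A := by rw [hx0]; exact hx₁A
      exact hd0.continuousAt.eventually_mem (hAopen.mem_nhds hxA)
    exact eventually_nhdsWithin_of_eventually_nhds this
  have hev3 : ∀ᶠ t in 𝓝[>] (0:ℝ), t ∈ Ioi (0:ℝ) := eventually_mem_nhdsWithin
  obtain ⟨t, ⟨hslope_t, hmemA⟩, htpos⟩ := ((hev1.and hev2).and hev3).exists
  have htpos' : (0:ℝ) < t := htpos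
  have hVt : V (x t) < V (x 0) := by
    rw [slope_def_field] at hslope_t
    have h := (div_neg_iff).mp hslope_t
    rcases h with ⟨h1, h2⟩ | ⟨h1, h2⟩
    · linarith
    · linarith
  have hVt' : V (x 0) ≤ V (x t) := by
    rw [hx0]
    exact hmin' (x t) (subset_closure hmemA)
  linarith
end

section
/- Hybrid under-estimate (following Hedlund–Rantzer): Let J̲ be C¹ with J̲(x_d)=0 satisfying (i) l(x,u) + ⟨∇J̲(x), f_k(x,u)⟩ ≥ 0 for every mode k, every x in the admissible region and u ∈ U, and (ii) l_m(x,u) + J̲(Δ(x,u)) − J̲(x) ≥ 0 for every admissible jump (x,u). Then for any hybrid trajectory with finitely many jumps at times t₁ < ⋯ < t_N, converging to x_d with finite cost, the total cost ∫₀^∞ l dt + Σ_s l_m(x(t_s⁻), u(t_s)) is at least J̲(x(0)). -/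
/-! Along each flow interval the dissipation inequality `0 ≤ l + DJ̲ · f` integrates to
`J̲(x(t_s⁺)) − J̲(x(t_{s+1}⁻)) ≤ ∫ l`, and at each jump the jump inequality gives
`J̲(x(t_s⁻)) − J̲(x(t_s⁺)) ≤ l_m`. On the final, unbounded interval the bound over `[t_N, T]`
passes to the limit `T → ∞`, where `J̲(x(T)) → J̲(x_d) = 0`. Summing, the values of `J̲` at
the jump times telescope to `J̲(x(0))`. -/

open MeasureTheory Set Finset Filter Topology

theorem Fin.sum_castSucc_sub_succ {G : Type*} [AddCommGroup G] {N : ℕ} (g : Fin (N + 1) → G) :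
    ∑ s : Fin N, (g s.castSucc - g s.succ) = g 0 - g (Fin.last N) := by
  induction N with
  | zero => simp
  | succ N ih =>
    have hinit := ih fun i => g i.castSucc
    simp only [Fin.sum_univ_castSucc, Fin.succ_castSucc, Fin.castSucc_zero] at hinit ⊢
    rw [hinit, Fin.succ_last]
    abel

section Dissipation

variable {E : Type*} [NormedAddCommGroup E] [NormedSpace ℝ E]
  {J : E → ℝ} {J' : E → E →L[ℝ] ℝ} {x v : ℝ → E} {φ : ℝ → ℝ}

theorem sub_le_setIntegral_Icc_of_dissipation {a b : ℝ} (hab : a ≤ b)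
    (hJ : ∀ t ∈ Icc a b, HasFDerivAt J (J' (x t)) (x t))
    (hx : ∀ t ∈ Icc a b, HasDerivAt x (v t) t)
    (hdiss : ∀ t ∈ Icc a b, 0 ≤ φ t + J' (x t) (v t))
    (hφ : IntegrableOn φ (Icc a b)) :
    J (x a) - J (x b) ≤ ∫ t in Icc a b, φ t := by
  have hderiv : ∀ t ∈ Icc a b, HasDerivAt (fun t => -J (x t)) (-J' (x t) (v t)) t :=
    fun t ht => ((hJ t ht).comp_hasDerivAt t (hx t ht)).neg
  have hFTC := intervalIntegral.sub_le_integral_of_hasDeriv_right_of_le hab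
    (fun t ht => (hderiv t ht).continuousAt.continuousWithinAt)
    (fun t ht => (hderiv t (Ioo_subset_Icc_self ht)).hasDerivWithinAt) hφ
    (fun t ht => neg_le_iff_add_nonneg.mpr (hdiss t (Ioo_subset_Icc_self ht)))
  rw [intervalIntegral.integral_of_le hab, ← integral_Icc_eq_integral_Ioc] at hFTC
  linarith

theorem sub_le_setIntegral_Ici_of_dissipation {a L : ℝ}
    (hJ : ∀ t ∈ Ici a, HasFDerivAt J (J' (x t)) (x t))
    (hx : ∀ t ∈ Ici a, HasDerivAt x (v t) t)
    (hdiss : ∀ t ∈ Ici a, 0 ≤ φ t + J' (x t) (v t))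
    (hφ : IntegrableOn φ (Ici a))
    (hlim : Tendsto (fun t => J (x t)) atTop (𝓝 L)) :
    J (x a) - L ≤ ∫ t in Ici a, φ t := by
  have hbound : ∀ᶠ T in atTop, J (x a) - J (x T) ≤ ∫ t in a..T, φ t := by
    filter_upwards [eventually_ge_atTop a] with T hT
    rw [intervalIntegral.integral_of_le hT, ← integral_Icc_eq_integral_Ioc]
    exact sub_le_setIntegral_Icc_of_dissipation hT (fun t ht => hJ t ht.1)
      (fun t ht => hx t ht.1) (fun t ht => hdiss t ht.1) (hφ.mono_set Icc_subset_Ici_self)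
  rw [integral_Ici_eq_integral_Ioi]
  exact le_of_tendsto_of_tendsto (tendsto_const_nhds.sub hlim)
    (intervalIntegral_tendsto_integral_Ioi a (hφ.mono_set Ioi_subset_Ici_self) tendsto_id) hbound

end Dissipation

/-- Hybrid under-estimate (following Hedlund–Rantzer): if `J̲` is `C¹` with `J̲(x_d)=0`,
satisfies the continuous HJB inequality in every mode on the admissible region `S` and the
jump inequality `l_m(x,u) + J̲(Δ(x,u)) − J̲(x) ≥ 0` on the admissible jump set, then any
hybrid trajectory with finitely many jumps at `τ 1 < ⋯ < τ N`, converging to `x_d` with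
finite cost, has total cost at least `J̲(x(0))`. -/
theorem hybrid_under_estimate (n m N : ℕ) (K : Type) 
    (J : (Fin n → ℝ) → ℝ) (J' : (Fin n → ℝ) → ((Fin n → ℝ) →L[ℝ] ℝ))
    (hJ : ∀ y, HasFDerivAt J (J' y) y)
    (l : (Fin n → ℝ) → (Fin m → ℝ) → ℝ)
    (lm : (Fin n → ℝ) → (Fin m → ℝ) → ℝ)
    (f : K → (Fin n → ℝ) → (Fin m → ℝ) → (Fin n → ℝ))
    (Δ : (Fin n → ℝ) → (Fin m → ℝ) → (Fin n → ℝ))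
    (S : Set (Fin n → ℝ)) (U : Set (Fin m → ℝ))
    (Jump : Set ((Fin n → ℝ) × (Fin m → ℝ)))
    (xd : Fin n → ℝ) (hJd : J xd = 0)
    -- (i) continuous HJB inequality in every mode
    (hHJBc : ∀ (k : K), ∀ y ∈ S, ∀ u ∈ U, 0 ≤ l y u + J' y (f k y u))
    -- (ii) jump HJB inequality
    (hHJBj : ∀ p ∈ Jump, 0 ≤ lm p.1 p.2 + J (Δ p.1 p.2) - J p.1)
    -- jump times 0 = τ 0 < τ 1 < ⋯ < τ N
    (τ : Fin (N + 1) → ℝ) (hτ0 : τ 0 = 0) (hτ : StrictMono τ)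
    -- trajectory pieces, modes, continuous control, jump controls
    (xs : Fin (N + 1) → ℝ → (Fin n → ℝ)) (mode : Fin (N + 1) → K)
    (u : ℝ → (Fin m → ℝ)) (w : Fin N → (Fin m → ℝ))
    (hu : ∀ t ∈ Ici (0:ℝ), u t ∈ U)
    -- continuous evolution on each bounded interval, staying in S
    (hode : ∀ s : Fin N, ∀ t ∈ Icc (τ s.castSucc) (τ s.succ),
      HasDerivAt (xs s.castSucc) (f (mode s.castSucc) (xs s.castSucc t) (u t)) t)
    (hSb : ∀ s : Fin N, ∀ t ∈ Icc (τ s.castSucc) (τ s.succ), xs s.castSucc t ∈ S)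
    -- continuous evolution on the final unbounded interval
    (hodeN : ∀ t ∈ Ici (τ (Fin.last N)),
      HasDerivAt (xs (Fin.last N)) (f (mode (Fin.last N)) (xs (Fin.last N) t) (u t)) t)
    (hSN : ∀ t ∈ Ici (τ (Fin.last N)), xs (Fin.last N) t ∈ S)
    -- jump resets: x(t_s⁺) = Δ(x(t_s⁻), u(t_s)), with admissible jumps
    (hjump : ∀ s : Fin N,
      xs s.succ (τ s.succ) = Δ (xs s.castSucc (τ s.succ)) (w s))
    (hjumpadm : ∀ s : Fin N, (xs s.castSucc (τ s.succ), w s) ∈ Jump)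
    -- convergence to x_d and finite cost
    (hconv : Filter.Tendsto (xs (Fin.last N)) Filter.atTop (nhds xd))
    (hint : ∀ s : Fin N,
      IntegrableOn (fun t => l (xs s.castSucc t) (u t)) (Icc (τ s.castSucc) (τ s.succ)))
    (hintN : IntegrableOn (fun t => l (xs (Fin.last N) t) (u t)) (Ici (τ (Fin.last N)))) :
    J (xs 0 0) ≤
      (∑ s : Fin N, ∫ t in Icc (τ s.castSucc) (τ s.succ), l (xs s.castSucc t) (u t))
      + (∫ t in Ici (τ (Fin.last N)), l (xs (Fin.last N) t) (u t))
      + ∑ s : Fin N, lm (xs s.castSucc (τ s.succ)) (w s) := by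
  have hτ_nonneg : ∀ i, 0 ≤ τ i := fun i => hτ0 ▸ hτ.monotone (Fin.zero_le i)
  have hflow : ∀ s : Fin N, J (xs s.castSucc (τ s.castSucc)) - J (xs s.castSucc (τ s.succ)) ≤
      ∫ t in Icc (τ s.castSucc) (τ s.succ), l (xs s.castSucc t) (u t) := fun s =>
    sub_le_setIntegral_Icc_of_dissipation (hτ Fin.castSucc_lt_succ).le (fun t _ => hJ _)
      (hode s) (fun t ht => hHJBc _ _ (hSb s t ht) _ (hu t ((hτ_nonneg _).trans ht.1))) (hint s)
  have htail : J (xs (Fin.last N) (τ (Fin.last N))) - J xd ≤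
      ∫ t in Ici (τ (Fin.last N)), l (xs (Fin.last N) t) (u t) :=
    sub_le_setIntegral_Ici_of_dissipation (fun t _ => hJ _) hodeN
      (fun t ht => hHJBc _ _ (hSN t ht) _ (hu t ((hτ_nonneg _).trans ht))) hintN
      ((hJ xd).continuousAt.tendsto.comp hconv)
  have hjumps : ∀ s : Fin N, J (xs s.castSucc (τ s.succ)) - J (xs s.succ (τ s.succ)) ≤
      lm (xs s.castSucc (τ s.succ)) (w s) := fun s => by
    have := hHJBj _ (hjumpadm s)
    rw [← hjump s] at this
    linarith
  have hsteps := Finset.sum_le_sum (s := univ) fun s _ =>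
    (add_le_add (hflow s) (hjumps s)).trans_eq' (sub_add_sub_cancel _ _ _)
  rw [Finset.sum_add_distrib, Fin.sum_castSucc_sub_succ fun i => J (xs i (τ i))] at hsteps
  simp only [hτ0, hJd] at hsteps htail
  linarith
end
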